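/- Let R be a perfect F-restriction monoid with identity λ, let P(R) be its semilattice of projections (with meet given by multiplication), and let M̄ = {m(r) : r ∈ R}. Then: (i) M̄ is a submonoid of R, and m satisfies m(rs) = m(r)m(s), m(λ) = λ, and m(r) = m(s) if and only if r σ s (so M̄ is a monoid isomorphic to the maximum reduced quotient R/σ); (ii) the assignment u·e = (ue)⁺ for u ∈ M̄ and e ∈ P(R) defines an action of the monoid M̄ on the semilattice P(R) by endomorphisms, and this action satisfies u·λ = λ for all u ∈ M̄; (iii) the map r ↦ (r⁺, m(r)) is a bijection from R onto the semidirect product P(R) ⋊ M̄ which preserves multiplication, the operation ⁺, the operation m, and the identity element. -/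

import Mathlib

/-- `e` is a projection: an element of the form `a⁺`. -/
def IsProjection {R : Type*} (plus : R → R) (e : R) : Prop := ∃ a, e = plus a

/-- The natural partial order: `s ≤ t` iff `s = s⁺·t`. -/
def NatLe {R : Type*} (mul : R → R → R) (plus : R → R) (s t : R) : Prop :=
  s = mul (plus s) t

/-- The relation σ: `s σ t` iff `e·s = e·t` for some projection `e`. -/
def SigmaRel {R : Type*} (mul : R → R → R) (plus : R → R) (s t : R) : Prop :=
  ∃ e, IsProjection plus e ∧ mul e s = mul e t

/-! A perfect F-restriction monoid `R` is rebuilt from the projection `r⁺` and the σ-class of `r`,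
represented by `m r`: every `r` satisfies `r = r⁺ · m r`, so `r ↦ (r⁺, m r)` is injective. For
the product, `r · s⁺ = r⁺ · (m r · s⁺)` gives `(rs)⁺ = (rs⁺)⁺ = r⁺ · (m r · s⁺)⁺`, the first
coordinate in the semidirect product, while `m (rs) = m r · m s` is perfectness. Surjectivity
comes from `(e · m a)⁺ = e · (m a)⁺ = e` and `m (e · m a) = m e · m a = m a`, a projection `e`
being σ-related to the identity. -/

structure IsRestriction {R : Type*} [Semigroup R] (plus : R → R) : Prop where
  plus_mul_self : ∀ x : R, plus x * x = x
  plus_mul_comm : ∀ x y : R, plus x * plus y = plus y * plus x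
  plus_plus_mul : ∀ x y : R, plus (plus x * y) = plus x * plus y
  mul_plus : ∀ x y : R, x * plus y = plus (x * y) * x

def IsSigmaMax {R : Type*} [Semigroup R] (plus m : R → R) : Prop :=
  ∀ a : R, SigmaRel (· * ·) plus (m a) a ∧
    ∀ t, SigmaRel (· * ·) plus t a → NatLe (· * ·) plus t (m a)

section Restriction

variable {R : Type*} [Semigroup R] {plus : R → R}

theorem sigmaRel_refl (r : R) : SigmaRel (· * ·) plus r r :=
  ⟨plus r, ⟨r, rfl⟩, rfl⟩

theorem SigmaRel.symm {r s : R} (h : SigmaRel (· * ·) plus r s) : SigmaRel (· * ·) plus s r :=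
  let ⟨e, he, hes⟩ := h
  ⟨e, he, hes.symm⟩

namespace IsRestriction

variable (hR : IsRestriction plus)
include hR

theorem plus_idem (x : R) : plus x * plus x = plus x := by
  rw [← hR.plus_plus_mul, hR.plus_mul_self]

theorem plus_plus (x : R) : plus (plus x) = plus x :=
  calc plus (plus x) = plus (plus x) * plus x := by
        rw [hR.plus_mul_comm, ← hR.plus_plus_mul, hR.plus_idem]
    _ = plus x := hR.plus_mul_self _

theorem plus_eq_self_of_isProjection {e : R} (he : IsProjection plus e) : plus e = e := by
  obtain ⟨a, rfl⟩ := he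
  exact hR.plus_plus a

theorem plus_mul_plus_absorb (u x : R) : plus u * plus (u * x) = plus (u * x) := by
  rw [← hR.plus_plus_mul, ← mul_assoc, hR.plus_mul_self]

theorem plus_mul_plus (r s : R) : plus (r * plus s) = plus (r * s) := by
  rw [hR.mul_plus, hR.plus_plus_mul, hR.plus_mul_comm, hR.plus_mul_plus_absorb]

theorem plus_mul_mul_plus (u a b : R) :
    plus (u * (plus a * plus b)) = plus (u * plus a) * plus (u * plus b) := by
  have hfac : u * (plus a * plus b) = plus (u * a) * (u * plus b) := by
    rw [← mul_assoc, hR.mul_plus u a, mul_assoc]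
  rw [hfac, hR.plus_plus_mul, hR.plus_mul_plus u a]

theorem natLe_antisymm {s t : R} (hst : NatLe (· * ·) plus s t) (hts : NatLe (· * ·) plus t s) :
    s = t :=
  calc s = plus s * (plus t * s) := hst.trans (congrArg _ hts)
    _ = plus t * (plus s * s) := by rw [← mul_assoc, hR.plus_mul_comm, mul_assoc]
    _ = t := by rw [hR.plus_mul_self]; exact hts.symm

theorem sigmaRel_trans {r s t : R} (hrs : SigmaRel (· * ·) plus r s)
    (hst : SigmaRel (· * ·) plus s t) : SigmaRel (· * ·) plus r t := by
  obtain ⟨_, ⟨a, rfl⟩, hrs : plus a * r = plus a * s⟩ := hrs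
  obtain ⟨_, ⟨b, rfl⟩, hst : plus b * s = plus b * t⟩ := hst
  refine ⟨plus a * plus b, ⟨plus a * b, (hR.plus_plus_mul a b).symm⟩, ?_⟩
  calc plus a * plus b * r = plus b * (plus a * r) := by rw [hR.plus_mul_comm, mul_assoc]
    _ = plus b * (plus a * s) := by rw [hrs]
    _ = plus a * (plus b * s) := by rw [← mul_assoc, ← hR.plus_mul_comm, mul_assoc]
    _ = plus a * (plus b * t) := by rw [hst]
    _ = plus a * plus b * t := by rw [mul_assoc]

theorem plus_eq_of_mul_identity {lam : R} (hlam : ∀ s : R, lam * s = s ∧ s * lam = s) :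
    plus lam = lam :=
  (hlam _).2.symm.trans (hR.plus_mul_self lam)

end IsRestriction

namespace IsSigmaMax

variable {m : R → R} (hF : IsSigmaMax plus m)
include hF

theorem eq_plus_mul (r : R) : r = plus r * m r :=
  (hF r).2 r (sigmaRel_refl r)

theorem injective_plus_prod : Function.Injective (fun r : R => (plus r, m r)) := by
  intro r s h
  obtain ⟨hplus, hm⟩ : plus r = plus s ∧ m r = m s := Prod.ext_iff.mp h
  rw [hF.eq_plus_mul r, hF.eq_plus_mul s, hplus, hm]

variable (hR : IsRestriction plus)
include hR

theorem apply_eq_of_sigmaRel {r s : R} (h : SigmaRel (· * ·) plus r s) : m r = m s :=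
  hR.natLe_antisymm ((hF s).2 _ (hR.sigmaRel_trans (hF r).1 h))
    ((hF r).2 _ (hR.sigmaRel_trans (hF s).1 h.symm))

theorem apply_eq_iff_sigmaRel (r s : R) : m r = m s ↔ SigmaRel (· * ·) plus r s := by
  refine ⟨fun h => ?_, hF.apply_eq_of_sigmaRel hR⟩
  exact hR.sigmaRel_trans (hF r).1.symm (h ▸ (hF s).1)

theorem apply_apply (r : R) : m (m r) = m r :=
  hF.apply_eq_of_sigmaRel hR (hF r).1

theorem plus_mul (r s : R) : plus (r * s) = plus r * plus (m r * plus s) := by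
  have hfac : r * plus s = plus r * (m r * plus s) := by rw [← mul_assoc, ← hF.eq_plus_mul r]
  rw [← hR.plus_mul_plus, hfac, hR.plus_plus_mul]

variable {lam : R} (hlam : ∀ s : R, lam * s = s ∧ s * lam = s)
include hlam

theorem apply_identity : m lam = lam :=
  calc m lam = plus lam * m lam := by rw [hR.plus_eq_of_mul_identity hlam, (hlam _).1]
    _ = lam := (hF.eq_plus_mul lam).symm

theorem apply_plus (r : R) : m (plus r) = lam := by
  have hσ : SigmaRel (· * ·) plus (plus r) lam :=
    ⟨plus r, ⟨r, rfl⟩, show plus r * plus r = plus r * lam by rw [hR.plus_idem, (hlam _).2]⟩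
  rw [hF.apply_eq_of_sigmaRel hR hσ, hF.apply_identity hR hlam]

theorem range_plus_prod_eq (hmul : ∀ s t : R, m s * m t = m (s * t))
    (hplus : ∀ s : R, plus (m s) = lam) :
    Set.range (fun r : R => (plus r, m r)) =
      {p : R × R | IsProjection plus p.1 ∧ p.2 ∈ Set.range m} := by
  ext ⟨e, u⟩
  constructor
  · rintro ⟨r, hr⟩
    cases hr
    exact ⟨⟨r, rfl⟩, r, rfl⟩
  · rintro ⟨⟨c, rfl⟩, a, rfl⟩
    refine ⟨plus c * m a, Prod.ext ?_ ?_⟩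
    · change plus (plus c * m a) = plus c
      rw [hR.plus_plus_mul, hplus, (hlam _).2]
    · change m (plus c * m a) = m a
      rw [← hmul, hF.apply_plus hR hlam, hF.apply_apply hR, (hlam _).1]

end IsSigmaMax

end Restriction

theorem stmt_9_general {R : Type*} [Semigroup R] (plus m : R → R) (lam : R)
    (h1 : ∀ x : R, plus x * x = x)
    (h2 : ∀ x y : R, plus x * plus y = plus y * plus x)
    (h3 : ∀ x y : R, plus (plus x * y) = plus x * plus y)
    (h4 : ∀ x y : R, x * plus y = plus (x * y) * x)
    -- R is a monoid with identity lam: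
    (hlamId : ∀ s : R, lam * s = s ∧ s * lam = s)
    -- m a is the maximum element of the σ-class of a:
    (hF : ∀ a : R, SigmaRel (· * ·) plus (m a) a ∧
      ∀ t, SigmaRel (· * ·) plus t a → NatLe (· * ·) plus t (m a))
    -- perfectness:
    (hperf1 : ∀ s t : R, m s * m t = m (s * t))
    (hperf2 : ∀ s : R, plus (m s) = lam) :
    -- (i) M̄ = range m is a submonoid and m is multiplicative, unital, and
    -- classifies σ:
    (lam ∈ Set.range m ∧
      ∀ u ∈ Set.range m, ∀ v ∈ Set.range m, u * v ∈ Set.range m) ∧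
    (∀ r s : R, m (r * s) = m r * m s) ∧
    (m lam = lam) ∧
    (∀ r s : R, m r = m s ↔ SigmaRel (· * ·) plus r s) ∧
    -- (ii) u·e = (ue)⁺ is an action of M̄ on P(R) by endomorphisms with u·λ = λ:
    (∀ u ∈ Set.range m, ∀ e : R, IsProjection plus e →
      IsProjection plus (plus (u * e))) ∧
    (∀ u ∈ Set.range m, ∀ v ∈ Set.range m, ∀ e : R, IsProjection plus e →
      plus (u * v * e) = plus (u * plus (v * e))) ∧
    (∀ e : R, IsProjection plus e → plus (lam * e) = e) ∧
    (∀ u ∈ Set.range m, ∀ e f : R, IsProjection plus e → IsProjection plus f →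
      plus (u * (e * f)) = plus (u * e) * plus (u * f)) ∧
    (∀ u ∈ Set.range m, plus (u * lam) = lam) ∧
    -- (iii) r ↦ (r⁺, m r) is a bijection onto P(R) ⋊ M̄ preserving ·, ⁺, m and
    -- the identity element:
    Function.Injective (fun r : R => (plus r, m r)) ∧
    (Set.range (fun r : R => (plus r, m r)) =
      {p : R × R | IsProjection plus p.1 ∧ p.2 ∈ Set.range m}) ∧
    (∀ r s : R, plus (r * s) = plus r * plus (m r * plus s) ∧
      m (r * s) = m r * m s) ∧
    (∀ r : R, plus (plus r) = plus r ∧ m (plus r) = lam) ∧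
    (∀ r : R, plus (m r) = lam ∧ m (m r) = m r) ∧
    (plus lam = lam ∧ m lam = lam) := by
  have hR : IsRestriction plus := ⟨h1, h2, h3, h4⟩
  have hF : IsSigmaMax plus m := hF
  have hmlam : m lam = lam := hF.apply_identity hR hlamId
  refine ⟨⟨⟨lam, hmlam⟩, ?_⟩, fun r s => (hperf1 r s).symm, hmlam, hF.apply_eq_iff_sigmaRel hR,
    fun u _ e _ => ⟨u * e, rfl⟩, fun u _ v _ e _ => by rw [mul_assoc, hR.plus_mul_plus],
    fun e he => by rw [(hlamId e).1, hR.plus_eq_self_of_isProjection he], ?_, ?_,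
    hF.injective_plus_prod, hF.range_plus_prod_eq hR hlamId hperf1 hperf2,
    fun r s => ⟨hF.plus_mul hR r s, (hperf1 r s).symm⟩,
    fun r => ⟨hR.plus_plus r, hF.apply_plus hR hlamId r⟩,
    fun r => ⟨hperf2 r, hF.apply_apply hR r⟩, hR.plus_eq_of_mul_identity hlamId, hmlam⟩
  · rintro _ ⟨a, rfl⟩ _ ⟨b, rfl⟩
    exact ⟨a * b, (hperf1 a b).symm⟩
  · rintro u - _ _ ⟨a, rfl⟩ ⟨b, rfl⟩
    exact hR.plus_mul_mul_plus u a b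
  · rintro _ ⟨a, rfl⟩
    rw [(hlamId _).2, hperf2]

/-- structure theorem for perfect F-restriction monoids: with
`M̄ = range m` and the action `u·e = (ue)⁺` of `M̄` on the projections,
`r ↦ (r⁺, m r)` is an isomorphism of `R` onto `P(R) ⋊ M̄`. -/
theorem stmt_9 {R : Type*} [Semigroup R] (plus m : R → R) (lam : R)
    (h1 : ∀ x : R, plus x * x = x)
    (h2 : ∀ x y : R, plus x * plus y = plus y * plus x)
    (h3 : ∀ x y : R, plus (plus x * y) = plus x * plus y)
    (h4 : ∀ x y : R, x * plus y = plus (x * y) * x)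
    -- R is a monoid with identity lam:
    (hlamId : ∀ s : R, lam * s = s ∧ s * lam = s)
    -- m a is the maximum element of the σ-class of a:
    (hF : ∀ a : R, SigmaRel (· * ·) plus (m a) a ∧
      ∀ t, SigmaRel (· * ·) plus t a → NatLe (· * ·) plus t (m a))
    -- lam is the maximum projection:
    (hlamProj : IsProjection plus lam)
    (hlamMax : ∀ e, IsProjection plus e → NatLe (· * ·) plus e lam)
    -- perfectness:
    (hperf1 : ∀ s t : R, m s * m t = m (s * t))
    (hperf2 : ∀ s : R, plus (m s) = lam) :
    -- (i) M̄ = range m is a submonoid and m is multiplicative, unital, and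
    -- classifies σ:
    (lam ∈ Set.range m ∧
      ∀ u ∈ Set.range m, ∀ v ∈ Set.range m, u * v ∈ Set.range m) ∧
    (∀ r s : R, m (r * s) = m r * m s) ∧
    (m lam = lam) ∧
    (∀ r s : R, m r = m s ↔ SigmaRel (· * ·) plus r s) ∧
    -- (ii) u·e = (ue)⁺ is an action of M̄ on P(R) by endomorphisms with u·λ = λ:
    (∀ u ∈ Set.range m, ∀ e : R, IsProjection plus e →
      IsProjection plus (plus (u * e))) ∧
    (∀ u ∈ Set.range m, ∀ v ∈ Set.range m, ∀ e : R, IsProjection plus e →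
      plus (u * v * e) = plus (u * plus (v * e))) ∧
    (∀ e : R, IsProjection plus e → plus (lam * e) = e) ∧
    (∀ u ∈ Set.range m, ∀ e f : R, IsProjection plus e → IsProjection plus f →
      plus (u * (e * f)) = plus (u * e) * plus (u * f)) ∧
    (∀ u ∈ Set.range m, plus (u * lam) = lam) ∧
    -- (iii) r ↦ (r⁺, m r) is a bijection onto P(R) ⋊ M̄ preserving ·, ⁺, m and
    -- the identity element:
    Function.Injective (fun r : R => (plus r, m r)) ∧
    (Set.range (fun r : R => (plus r, m r)) =
      {p : R × R | IsProjection plus p.1 ∧ p.2 ∈ Set.range m}) ∧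
    (∀ r s : R, plus (r * s) = plus r * plus (m r * plus s) ∧
      m (r * s) = m r * m s) ∧
    (∀ r : R, plus (plus r) = plus r ∧ m (plus r) = lam) ∧
    (∀ r : R, plus (m r) = lam ∧ m (m r) = m r) ∧
    (plus lam = lam ∧ m lam = lam) :=
  stmt_9_general plus m lam h1 h2 h3 h4 hlamId hF hperf1 hperf2
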